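/- arXiv:2509.14396 — 4 statements merged into one kernel-verified Lean document; each statement's English description precedes it below -/
import Mathlib

section
/- Suppose p ∈ [0, 1/3). Then for every q ∈ (p, 1/2], the payoff pair (φ_W(1−q), φ_B(q)) = (q − 1, 2p − q) is strictly dominated (in both coordinates) by the pair (−q', q') for some q' ∈ [0, p], where a pair (a,b) dominates (a',b') if a ≥ a' and b ≥ b' with at least one inequality strict. -/
theorem dominated_pairs_small_p (p q : ℝ) (hp0 : 0 ≤ p) (hp : p < 1/3)
    (hq1 : p < q) (hq2 : q ≤ 1/2) :
    ∃ q' : ℝ, 0 ≤ q' ∧ q' ≤ p ∧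
      q - 1 ≤ -q' ∧ 2 * p - q ≤ q' ∧ (q - 1 < -q' ∨ 2 * p - q < q') := by
  exact ⟨p, hp0, le_refl p, by linarith, by linarith, Or.inr (by linarith)⟩
end

section
/- Let 0 ≤ τ̲ ≤ p ≤ τ̄ ≤ 1 with p < 1/2 and τ̲ < 1/2. The set of q ∈ [0,1] for which there exist π₁, π₀ ∈ [τ̲, τ̄] with q·π₁ + (1−q)·π₀ = p and π₁ ≥ 1/2 > π₀ equals [0, 2(p − τ̲)/(1 − 2τ̲)], provided τ̄ ≥ 1/2. -/
theorem BP_tau_characterization (τl τu p : ℝ)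
    (h0 : 0 ≤ τl) (h1 : τl ≤ p) (h2 : p ≤ τu) (h3 : τu ≤ 1)
    (hp : p < 1/2) (hτl : τl < 1/2) (hτu : 1/2 ≤ τu) :
    {q : ℝ | q ∈ Set.Icc (0:ℝ) 1 ∧ ∃ π1 π0 : ℝ,
        π1 ∈ Set.Icc τl τu ∧ π0 ∈ Set.Icc τl τu ∧
        q * π1 + (1 - q) * π0 = p ∧ 1/2 ≤ π1 ∧ π0 < 1/2}
      = Set.Icc 0 (2 * (p - τl) / (1 - 2 * τl)) := by
  have hD : (0:ℝ) < 1 - 2 * τl := by linarith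
  ext q
  simp only [Set.mem_setOf_eq, Set.mem_Icc]
  constructor
  · rintro ⟨⟨hq0, hq1⟩, π1, π0, ⟨hπ1l, hπ1u⟩, ⟨hπ0l, hπ0u⟩, heq, hh1, hh0⟩
    refine ⟨hq0, ?_⟩
    rw [le_div_iff₀ hD]
    nlinarith [mul_nonneg hq0 (by linarith : (0:ℝ) ≤ π1 - 1/2),
      mul_nonneg (by linarith : (0:ℝ) ≤ 1 - q) (by linarith : (0:ℝ) ≤ π0 - τl)]
  · rintro ⟨hq0, hqM⟩
    have hqM' : q * (1 - 2 * τl) ≤ 2 * (p - τl) := (le_div_iff₀ hD).mp hqM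
    have hq1 : q < 1 := by nlinarith
    have hq1' : (0:ℝ) < 1 - q := by linarith
    refine ⟨⟨hq0, le_of_lt hq1⟩, 1/2, (p - q/2) / (1 - q), ⟨by linarith, hτu⟩,
      ⟨?_, ?_⟩, ?_, le_refl _, ?_⟩
    · rw [le_div_iff₀ hq1']; nlinarith
    · rw [div_le_iff₀ hq1']; nlinarith
    · field_simp; ring
    · rw [div_lt_iff₀ hq1']; linarith
end

section
/- Let 0 ≤ τ̲ ≤ p ≤ τ̄ ≤ 1 and q ∈ [0,1]. The maximum of q(2π₁* − 1) over π₁*, π₀* ∈ [τ̲, τ̄] with qπ₁* + (1−q)π₀* = p equals q(2τ̄ − 1) if q ≤ (p − τ̲)/(τ̄ − τ̲), and equals 2p − 2(1−q)τ̲ − q otherwise (assuming τ̲ < τ̄). -/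
theorem best_case_phi_tau (τl τu p q : ℝ)
    (h0 : 0 ≤ τl) (h1 : τl ≤ p) (h2 : p ≤ τu) (h3 : τu ≤ 1) (hlt : τl < τu)
    (hq0 : 0 ≤ q) (hq1 : q ≤ 1) :
    IsGreatest {v : ℝ | ∃ π1 π0 : ℝ, π1 ∈ Set.Icc τl τu ∧ π0 ∈ Set.Icc τl τu ∧
        q * π1 + (1 - q) * π0 = p ∧ v = q * (2 * π1 - 1)}
      (if q ≤ (p - τl) / (τu - τl) then q * (2 * τu - 1)
       else 2 * p - 2 * (1 - q) * τl - q) := by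
  have hd : 0 < τu - τl := by linarith
  split_ifs with hc
  · constructor
    · by_cases hq : q = 1
      · subst hq
        refine ⟨τu, τl, ⟨le_of_lt hlt, le_refl _⟩, ⟨le_refl _, le_of_lt hlt⟩, ?_, rfl⟩
        have h5 : τu - τl ≤ p - τl := by
          have := hc
          rwa [le_div_iff₀ hd, one_mul] at this
        linarith
      · have hq' : q < 1 := lt_of_le_of_ne hq1 hq
        have h1q : 0 < 1 - q := by linarith
        have hcc : q * (τu - τl) ≤ p - τl := by
          rw [le_div_iff₀ hd] at hc; linarith
        refine ⟨τu, (p - q*τu)/(1-q), ⟨le_of_lt hlt, le_refl _⟩, ⟨?_, ?_⟩, ?_, rfl⟩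
        · rw [le_div_iff₀ h1q]; nlinarith
        · rw [div_le_iff₀ h1q]; nlinarith
        · field_simp; ring
    · rintro v ⟨π1, π0, h1', _, _, rfl⟩
      nlinarith [h1'.2]
  · push_neg at hc
    have hc' : p - τl < q * (τu - τl) := by
      rw [div_lt_iff₀ hd] at hc; linarith
    have hqpos : 0 < q := by nlinarith
    constructor
    · refine ⟨(p - (1-q)*τl)/q, τl, ⟨?_, ?_⟩, ⟨le_refl _, le_of_lt hlt⟩, ?_, ?_⟩
      · rw [le_div_iff₀ hqpos]; nlinarith
      · rw [div_le_iff₀ hqpos]; nlinarith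
      · field_simp; ring
      · field_simp
    · rintro v ⟨π1, π0, _, h0', hbp, rfl⟩
      nlinarith [h0'.1]
end

section
/- Fix p ∈ (0, 1/3] and α ∈ ((1−p)/2, 1/(2(1−p))). Define g(t) = ((p − t)/(1 − t))·(2α(t − 1) + 1) for t ∈ [0, p]. Then g is maximized on [0, p] at t* = 1 − √((1 − p)/(2α)), and t* ∈ [0, p]. -/
theorem trust_payoff_maximizer (p α : ℝ) (hp0 : 0 < p) (hp1 : p ≤ 1/3)
    (hα1 : (1 - p) / 2 < α) (hα2 : α < 1 / (2 * (1 - p))) :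
    (1 - Real.sqrt ((1 - p) / (2 * α))) ∈ Set.Icc 0 p ∧
    ∀ t ∈ Set.Icc (0:ℝ) p,
      ((p - t) / (1 - t)) * (2 * α * (t - 1) + 1) ≤
        ((p - (1 - Real.sqrt ((1 - p) / (2 * α)))) / (1 - (1 - Real.sqrt ((1 - p) / (2 * α))))) *
          (2 * α * ((1 - Real.sqrt ((1 - p) / (2 * α))) - 1) + 1) := by
  set s := Real.sqrt ((1 - p) / (2 * α)) with hs_def
  have h1p : 0 < 1 - p := by linarith
  have hα0 : 0 < α := by linarith
  have hfrac : 0 < (1 - p) / (2 * α) := by positivity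
  have hs0 : 0 < s := Real.sqrt_pos.mpr hfrac
  have hs2 : s ^ 2 = (1 - p) / (2 * α) := Real.sq_sqrt hfrac.le
  have hs2' : 2 * α * s ^ 2 = 1 - p := by
    rw [hs2]; field_simp
  have hα2' : 2 * α * (1 - p) < 1 := by
    have h := (lt_div_iff₀ (by positivity : (0:ℝ) < 2 * (1 - p))).mp hα2
    nlinarith [h]
  have hsq_lt : s ^ 2 < 1 := by nlinarith
  have hs_lt1 : s < 1 := by nlinarith [sq_nonneg (s - 1)]
  have hsq_gt : (1 - p) ^ 2 < s ^ 2 := by nlinarith [mul_pos h1p (by linarith : (0:ℝ) < 1 - 2 * α * (1 - p))]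
  have hs_ge : 1 - p < s := by nlinarith [sq_nonneg (s - (1 - p)), mul_pos hs0 h1p]
  refine ⟨⟨by linarith, by linarith⟩, ?_⟩
  intro t ht
  obtain ⟨ht0, htp⟩ := ht
  have hu : 0 < 1 - t := by linarith
  have hRHS : ((p - (1 - s)) / (1 - (1 - s))) * (2 * α * ((1 - s) - 1) + 1)
      = (1 - 2 * α * s) ^ 2 := by
    have h1 : 1 - (1 - s) = s := by ring
    rw [h1]
    field_simp
    nlinarith [hs2']
  rw [hRHS, div_mul_eq_mul_div, div_le_iff₀ hu]
  nlinarith [mul_nonneg hα0.le (sq_nonneg ((1 - t) - s)), hs2']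
end
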